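/- Let E(L,S) = (1/2)‖𝒜(L) + S − D‖_F² + λ‖S‖_1 + μ‖L‖_*, where 𝒜 is a bounded linear operator with operator norm ‖𝒜‖. If the sequence (L^k, S^k) is generated by S^k = soft-threshold_λ(D − 𝒜(L^{k-1})) and L^k = prox_{tμ}(L^{k-1} − t 𝒜*(𝒜(L^{k-1}) + S^k − D)) with prox taken over matrices of rank ≤ p, then E(L^{k+1},S^{k+1}) ≤ E(L^k,S^k) + (‖𝒜‖²/2 − 1/(2t))‖L^{k+1}−L^k‖_F² − (1/2)‖S^{k+1}−S^k‖_F². In particular, if t < 1/‖𝒜‖², E(L^k,S^k) is non-increasing. -/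

import Mathlib

open Matrix Finset Filter

/-- Frobenius norm of a real matrix. -/
noncomputable def frob {m n : ℕ} (A : Matrix (Fin m) (Fin n) ℝ) : ℝ :=
  Real.sqrt (∑ i, ∑ j, (A i j) ^ 2)

/-- Nuclear norm: sum of the singular values, i.e. of the square roots of the
eigenvalues of `Aᵀ * A`. -/
noncomputable def nuclearNorm {m n : ℕ} (A : Matrix (Fin m) (Fin n) ℝ) : ℝ :=
  ∑ i, Real.sqrt ((show (Aᵀ * A).IsHermitian from Matrix.isHermitian_conjTranspose_mul_self A).eigenvalues i)

/-- `σ` is the (decreasingly ordered) vector of singular values of a compact SVD of `A`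
with inner dimension `q`. -/
def HasSVD {m n q : ℕ} (A : Matrix (Fin m) (Fin n) ℝ) (σ : Fin q → ℝ) : Prop :=
  (∀ i, 0 ≤ σ i) ∧ Antitone σ ∧
    ∃ (U : Matrix (Fin m) (Fin q) ℝ) (V : Matrix (Fin n) (Fin q) ℝ),
      Uᵀ * U = 1 ∧ Vᵀ * V = 1 ∧ A = U * Matrix.diagonal σ * Vᵀ

lemma frob_sq_eq {m n : ℕ} (X : Matrix (Fin m) (Fin n) ℝ) :
    frob X ^ 2 = ∑ i, ∑ j, (X i j) ^ 2 := by
  rw [frob, Real.sq_sqrt]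
  positivity

lemma frob_nonneg {m n : ℕ} (X : Matrix (Fin m) (Fin n) ℝ) : 0 ≤ frob X :=
  Real.sqrt_nonneg _

lemma frob_add_sq {m n : ℕ} (X Y : Matrix (Fin m) (Fin n) ℝ) :
    frob (X + Y) ^ 2 = frob X ^ 2 + 2 * (∑ i, ∑ j, X i j * Y i j) + frob Y ^ 2 := by
  simp only [frob_sq_eq, Matrix.add_apply, Finset.mul_sum, ← Finset.sum_add_distrib]
  apply Finset.sum_congr rfl; intro i _
  apply Finset.sum_congr rfl; intro j _
  ring

lemma frob_add_smul_sq {m n : ℕ} (X Y : Matrix (Fin m) (Fin n) ℝ) (a : ℝ) :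
    frob (X + a • Y) ^ 2
      = frob X ^ 2 + 2 * a * (∑ i, ∑ j, X i j * Y i j) + a ^ 2 * frob Y ^ 2 := by
  simp only [frob_sq_eq, Matrix.add_apply, Matrix.smul_apply, smul_eq_mul,
    Finset.mul_sum, ← Finset.sum_add_distrib]
  apply Finset.sum_congr rfl; intro i _
  apply Finset.sum_congr rfl; intro j _
  ring

lemma frob_smul_sq {m n : ℕ} (a : ℝ) (X : Matrix (Fin m) (Fin n) ℝ) :
    frob (a • X) ^ 2 = a ^ 2 * frob X ^ 2 := by
  simp only [frob_sq_eq, Matrix.smul_apply, smul_eq_mul, mul_pow, Finset.mul_sum]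

lemma frob_sub_symm {m n : ℕ} (X Y : Matrix (Fin m) (Fin n) ℝ) :
    frob (X - Y) = frob (Y - X) := by
  rw [frob, frob]
  congr 1
  apply Finset.sum_congr rfl; intro i _
  apply Finset.sum_congr rfl; intro j _
  simp only [Matrix.sub_apply]
  ring

lemma trace_ip {m n : ℕ} (X Y : Matrix (Fin m) (Fin n) ℝ) :
    Matrix.trace (Xᵀ * Y) = ∑ i, ∑ j, X i j * Y i j := by
  simp only [Matrix.trace, Matrix.diag, Matrix.mul_apply, Matrix.transpose_apply]
  rw [Finset.sum_comm]

lemma scalar_soft (lam d y : ℝ) (hlam : 0 < lam) :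
    (1/2) * (Real.sign d * max 0 (|d| - lam) - d)^2
      + lam * |Real.sign d * max 0 (|d| - lam)|
      + (1/2) * (y - Real.sign d * max 0 (|d| - lam))^2
      ≤ (1/2) * (y - d)^2 + lam * |y| := by
  rcases le_or_gt |d| lam with h | h
  · have hmax : max 0 (|d| - lam) = 0 := max_eq_left (by linarith)
    rw [hmax, mul_zero]
    have h1 : d * y ≤ lam * |y| :=
      calc d * y ≤ |d * y| := le_abs_self _
        _ = |d| * |y| := abs_mul _ _
        _ ≤ lam * |y| := mul_le_mul_of_nonneg_right h (abs_nonneg y)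
    simp only [abs_zero, mul_zero]
    nlinarith
  · have hmax : max 0 (|d| - lam) = |d| - lam := max_eq_right (by linarith)
    rw [hmax]
    rcases lt_trichotomy d 0 with hd | hd | hd
    · rw [Real.sign_of_neg hd, abs_of_neg hd]
      have e : (-1 : ℝ) * (-d - lam) = d + lam := by ring
      rw [e, abs_of_nonpos (by rw [abs_of_neg hd] at h; linarith)]
      nlinarith [neg_le_abs y, hlam.le]
    · subst hd; simp at h; linarith
    · rw [Real.sign_of_pos hd, abs_of_pos hd]
      have e : (1 : ℝ) * (d - lam) = d - lam := by ring
      rw [e, abs_of_nonneg (by rw [abs_of_pos hd] at h; linarith)]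
      nlinarith [le_abs_self y, hlam.le]

lemma sum_comb3 {m n : ℕ} (a b e : ℝ) (f g h : Fin m → Fin n → ℝ) :
    a * (∑ i, ∑ j, f i j) + b * (∑ i, ∑ j, g i j) + e * (∑ i, ∑ j, h i j)
      = ∑ i, ∑ j, (a * f i j + b * g i j + e * h i j) := by
  simp only [Finset.mul_sum, ← Finset.sum_add_distrib]

lemma sum_comb2 {m n : ℕ} (a b : ℝ) (f g : Fin m → Fin n → ℝ) :
    a * (∑ i, ∑ j, f i j) + b * (∑ i, ∑ j, g i j)
      = ∑ i, ∑ j, (a * f i j + b * g i j) := by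
  simp only [Finset.mul_sum, ← Finset.sum_add_distrib]

/-- Sufficient-decrease inequality for the forward–backward RPCA iteration, and monotonicity
of the objective when `t < 1/‖𝒜‖²`. -/
theorem forward_backward_descent {m n p : ℕ}
    (D : Matrix (Fin m) (Fin n) ℝ)
    (A Astar : Matrix (Fin m) (Fin n) ℝ →ₗ[ℝ] Matrix (Fin m) (Fin n) ℝ)
    (hadj : ∀ X Y : Matrix (Fin m) (Fin n) ℝ,
      Matrix.trace ((A X)ᵀ * Y) = Matrix.trace (Xᵀ * (Astar Y)))
    (c : ℝ) (hc : 0 ≤ c) (hbound : ∀ X, frob (A X) ≤ c * frob X)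
    (lam mu t : ℝ) (hlam : 0 < lam) (hmu : 0 < mu) (ht : 0 < t)
    (L S : ℕ → Matrix (Fin m) (Fin n) ℝ)
    (hrank0 : (L 0).rank ≤ p)
    (hS : ∀ k, S (k+1) =
      Matrix.of fun i j => Real.sign (D i j - A (L k) i j) *
        max 0 (|D i j - A (L k) i j| - lam))
    (hL : ∀ k, (L (k+1)).rank ≤ p ∧
      ∀ Z : Matrix (Fin m) (Fin n) ℝ, Z.rank ≤ p →
        (1/2) * frob (L (k+1) - (L k - t • Astar (A (L k) + S (k+1) - D))) ^ 2
            + t * mu * nuclearNorm (L (k+1)) ≤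
          (1/2) * frob (Z - (L k - t • Astar (A (L k) + S (k+1) - D))) ^ 2
            + t * mu * nuclearNorm Z) :
    let E : Matrix (Fin m) (Fin n) ℝ → Matrix (Fin m) (Fin n) ℝ → ℝ := fun X Y =>
      (1/2) * frob (A X + Y - D) ^ 2 + lam * (∑ i, ∑ j, |Y i j|) + mu * nuclearNorm X
    (∀ k, E (L (k+1)) (S (k+1)) ≤ E (L k) (S k)
        + (c ^ 2 / 2 - 1 / (2 * t)) * frob (L (k+1) - L k) ^ 2
        - (1/2) * frob (S (k+1) - S k) ^ 2) ∧
      (t < 1 / c ^ 2 → ∀ k, E (L (k+1)) (S (k+1)) ≤ E (L k) (S k)) := by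
  intro E
  have hrank : ∀ k, (L k).rank ≤ p := by
    intro k
    induction k with
    | zero => exact hrank0
    | succ k _ => exact (hL k).1
  have main : ∀ k, E (L (k+1)) (S (k+1)) ≤ E (L k) (S k)
      + (c ^ 2 / 2 - 1 / (2 * t)) * frob (L (k+1) - L k) ^ 2
      - (1/2) * frob (S (k+1) - S k) ^ 2 := by
    intro k
    -- Step A : the S-update decreases the objective (with quadratic improvement)
    have stepA : (1/2) * frob (A (L k) + S (k+1) - D) ^ 2
          + lam * (∑ i, ∑ j, |S (k+1) i j|) + (1/2) * frob (S k - S (k+1)) ^ 2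
        ≤ (1/2) * frob (A (L k) + S k - D) ^ 2 + lam * (∑ i, ∑ j, |S k i j|) := by
      have key : ∀ i j,
          (1/2) * ((A (L k) + S (k+1) - D) i j) ^ 2 + lam * |S (k+1) i j|
            + (1/2) * ((S k - S (k+1)) i j) ^ 2
          ≤ (1/2) * ((A (L k) + S k - D) i j) ^ 2 + lam * |S k i j| := by
        intro i j
        have hSij : S (k+1) i j = Real.sign (D i j - A (L k) i j)
            * max 0 (|D i j - A (L k) i j| - lam) := by rw [hS k]; rfl
        have h := scalar_soft lam (D i j - A (L k) i j) (S k i j) hlam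
        rw [← hSij] at h
        simp only [Matrix.add_apply, Matrix.sub_apply]
        have e1 : A (L k) i j + S (k+1) i j - D i j
            = S (k+1) i j - (D i j - A (L k) i j) := by ring
        have e2 : A (L k) i j + S k i j - D i j
            = S k i j - (D i j - A (L k) i j) := by ring
        rw [e1, e2]
        exact h
      rw [frob_sq_eq, frob_sq_eq, frob_sq_eq, sum_comb3, sum_comb2]
      exact Finset.sum_le_sum fun i _ => Finset.sum_le_sum fun j _ => key i j
    -- Step B : the L-update inequality
    have hZ := (hL k).2 (L k) (hrank k)
    have e1 : L (k+1) - (L k - t • Astar (A (L k) + S (k+1) - D))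
        = (L (k+1) - L k) + t • Astar (A (L k) + S (k+1) - D) := by
      ext i j
      simp [Matrix.sub_apply, Matrix.add_apply, Matrix.smul_apply]
      ring
    have e2 : L k - (L k - t • Astar (A (L k) + S (k+1) - D))
        = t • Astar (A (L k) + S (k+1) - D) := by
      ext i j
      simp [Matrix.sub_apply, Matrix.add_apply, Matrix.smul_apply]
    rw [e1, e2, frob_add_smul_sq, frob_smul_sq] at hZ
    -- rewrite the inner product term via the adjoint
    have hadj' : (∑ i, ∑ j, (L (k+1) - L k) i j * Astar (A (L k) + S (k+1) - D) i j)
        = ∑ i, ∑ j, (A (L (k+1) - L k)) i j * (A (L k) + S (k+1) - D) i j := by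
      rw [← trace_ip, ← trace_ip, ← hadj]
    rw [hadj'] at hZ
    -- expansion of the new residual
    have e3 : A (L (k+1)) + S (k+1) - D
        = A (L (k+1) - L k) + (A (L k) + S (k+1) - D) := by
      rw [map_sub]
      abel
    have e4 : frob (A (L (k+1)) + S (k+1) - D) ^ 2
        = frob (A (L (k+1) - L k)) ^ 2
          + 2 * (∑ i, ∑ j, (A (L (k+1) - L k)) i j * (A (L k) + S (k+1) - D) i j)
          + frob (A (L k) + S (k+1) - D) ^ 2 := by
      rw [e3, frob_add_sq]
    -- bound on the operator
    have hAL : frob (A (L (k+1) - L k)) ^ 2 ≤ c ^ 2 * frob (L (k+1) - L k) ^ 2 := by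
      have hb := hbound (L (k+1) - L k)
      nlinarith [frob_nonneg (A (L (k+1) - L k)), frob_nonneg (L (k+1) - L k)]
    -- divide hZ by t
    have hZ2 : (∑ i, ∑ j, (A (L (k+1) - L k)) i j * (A (L k) + S (k+1) - D) i j)
          + mu * nuclearNorm (L (k+1))
        ≤ mu * nuclearNorm (L k) - (1 / (2 * t)) * frob (L (k+1) - L k) ^ 2 := by
      have ht' : t ≠ 0 := ne_of_gt ht
      rw [← mul_le_mul_iff_right₀ ht]
      have hfact : t * (mu * nuclearNorm (L k)
            - 1 / (2 * t) * frob (L (k+1) - L k) ^ 2)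
          = t * mu * nuclearNorm (L k) - (1/2) * frob (L (k+1) - L k) ^ 2 := by
        field_simp
      rw [hfact]
      nlinarith [hZ]  -- linear in monomials
    -- symmetry of the S-difference norm
    have hsym : frob (S k - S (k+1)) = frob (S (k+1) - S k) := frob_sub_symm _ _
    show (1/2) * frob (A (L (k+1)) + S (k+1) - D) ^ 2
        + lam * (∑ i, ∑ j, |S (k+1) i j|) + mu * nuclearNorm (L (k+1))
      ≤ (1/2) * frob (A (L k) + S k - D) ^ 2 + lam * (∑ i, ∑ j, |S k i j|)
          + mu * nuclearNorm (L k)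
        + (c ^ 2 / 2 - 1 / (2 * t)) * frob (L (k+1) - L k) ^ 2
        - (1/2) * frob (S (k+1) - S k) ^ 2
    rw [e4]
    rw [← hsym]
    linarith [stepA, hZ2, hAL]
  clear_value E
  refine ⟨main, ?_⟩
  intro htc k
  have hcoef : c ^ 2 / 2 - 1 / (2 * t) ≤ 0 := by
    rcases eq_or_lt_of_le hc with hc0 | hc0
    · exfalso
      rw [← hc0] at htc
      simp at htc
      linarith
    · have hcc : 0 < c ^ 2 := by positivity
      have h1 : t * c ^ 2 < 1 := (lt_div_iff₀ hcc).mp htc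
      have h2 : (0:ℝ) < 2 * t := by linarith
      rw [sub_nonpos, div_le_div_iff₀ (by norm_num : (0:ℝ) < 2) h2]
      nlinarith
  have h1 := main k
  have h2 : (c ^ 2 / 2 - 1 / (2 * t)) * frob (L (k+1) - L k) ^ 2 ≤ 0 :=
    mul_nonpos_of_nonpos_of_nonneg hcoef (sq_nonneg _)
  have h3 : 0 ≤ (1/2) * frob (S (k+1) - S k) ^ 2 := by positivity
  linarith
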